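/- Let k ≥ 2, let n be even with n ≥ 3k+1, and let x satisfy 2k ≤ x ≤ n-k-1 with x·n even as needed for parity. Then the sequence d = (n-1, …, n-1, x, …, x, k, …, k) of length n, with k leading copies of n-1, n-2k middle copies of x, and k trailing copies of k, is graphic, provided the total degree sum is even. -/

import Mathlib

/-- A finite list of naturals is graphic if it is realized as the degree sequence of a
simple graph. -/
def IsGraphicList (l : List ℕ) : Prop :=
  ∃ (G : SimpleGraph (Fin l.length)) (_ : DecidableRel G.Adj), ∀ i, G.degree i = l.get i

/-!
Join `k` dominating vertices to the disjoint union of a `(x - k)`-regular graph on `n - 2k`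
vertices and `k` isolated vertices. The regular graph is a circulant graph on `ZMod m`,
`m = n - 2k`, whose jump set is an interval centred at `m / 2` (with `m / 2` removed when
`x - k` is even); evenness of `m` makes `m / 2` its own negative, so the jump set is symmetric.
-/

open Finset

namespace SimpleGraph

variable {V W : Type*}

@[simps]
def join (G : SimpleGraph V) (H : SimpleGraph W) : SimpleGraph (V ⊕ W) where
  Adj
    | Sum.inl v, Sum.inl v' => G.Adj v v'
    | Sum.inr w, Sum.inr w' => H.Adj w w'
    | _, _ => True
  symm.symm
    | Sum.inl _, Sum.inl _ => G.adj_symm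
    | Sum.inr _, Sum.inr _ => H.adj_symm
    | Sum.inl _, Sum.inr _ | Sum.inr _, Sum.inl _ => id
  loopless.irrefl
    | Sum.inl v => G.loopless.irrefl v
    | Sum.inr w => H.loopless.irrefl w

instance (G : SimpleGraph V) (H : SimpleGraph W) [DecidableRel G.Adj] [DecidableRel H.Adj] :
    DecidableRel (G.join H).Adj := fun a b => by
  cases a <;> cases b <;> dsimp only [join] <;> infer_instance

instance (G : SimpleGraph V) (H : SimpleGraph W) [DecidableRel G.Adj] [DecidableRel H.Adj] :
    DecidableRel (G ⊕g H).Adj := fun a b => by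
  cases a <;> cases b <;> dsimp only [SimpleGraph.sum] <;> infer_instance

section Degree

variable [Fintype V] [Fintype W] (G : SimpleGraph V) (H : SimpleGraph W)
  [DecidableRel G.Adj] [DecidableRel H.Adj]

theorem degree_join_inl (v : V) :
    (G.join H).degree (Sum.inl v) = G.degree v + Fintype.card W := by
  have : (G.join H).neighborFinset (Sum.inl v) = (G.neighborFinset v).disjSum univ := by
    ext (v' | w) <;> simp
  rw [← card_neighborFinset_eq_degree, this, card_disjSum, card_neighborFinset_eq_degree,
    card_univ]

theorem degree_join_inr (w : W) :
    (G.join H).degree (Sum.inr w) = Fintype.card V + H.degree w := by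
  have : (G.join H).neighborFinset (Sum.inr w) = univ.disjSum (H.neighborFinset w) := by
    ext (v | w') <;> simp
  rw [← card_neighborFinset_eq_degree, this, card_disjSum, card_neighborFinset_eq_degree,
    card_univ]

theorem degree_sum_inl (v : V) : (G ⊕g H).degree (Sum.inl v) = G.degree v := by
  have : (G ⊕g H).neighborFinset (Sum.inl v) = (G.neighborFinset v).disjSum ∅ := by
    ext (v' | w) <;> simp
  rw [← card_neighborFinset_eq_degree, this, card_disjSum, card_neighborFinset_eq_degree,
    card_empty, add_zero]

theorem degree_sum_inr (w : W) : (G ⊕g H).degree (Sum.inr w) = H.degree w := by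
  have : (G ⊕g H).neighborFinset (Sum.inr w) = (∅ : Finset V).disjSum (H.neighborFinset w) := by
    ext (v | w') <;> simp
  rw [← card_neighborFinset_eq_degree, this, card_disjSum, card_neighborFinset_eq_degree,
    card_empty, zero_add]

theorem degree_comap_equiv (e : W ≃ V) (w : W) : (G.comap e).degree w = G.degree (e w) := by
  have : (G.comap e).neighborFinset w = (G.neighborFinset (e w)).map e.symm.toEmbedding := by
    ext v
    simp
  rw [← card_neighborFinset_eq_degree, this, card_map, card_neighborFinset_eq_degree]

variable {G} in
theorem IsRegularOfDegree.comap_equiv {d : ℕ} (h : G.IsRegularOfDegree d) (e : W ≃ V) :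
    (G.comap e).IsRegularOfDegree d := fun w => by
  rw [degree_comap_equiv, h.degree_eq]

end Degree

theorem isRegularOfDegree_circulantGraph {G : Type*} [AddGroup G] [Fintype G] [DecidableEq G]
    {s : Finset G} (h0 : (0 : G) ∉ s) (hneg : ∀ a ∈ s, -a ∈ s) :
    (circulantGraph (s : Set G)).IsRegularOfDegree #s := fun v => by
  have : (circulantGraph (s : Set G)).neighborFinset v = s.map (Equiv.addRight v).toEmbedding := by
    ext w
    simp only [mem_neighborFinset, circulantGraph_adj, mem_coe, mem_map_equiv,
      Equiv.addRight_symm_apply, ← sub_eq_add_neg]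
    exact ⟨fun ⟨_, h⟩ => h.elim (fun h => by simpa using hneg _ h) id,
      fun h => ⟨fun hvw => h0 (by simpa [hvw] using h), Or.inr h⟩⟩
  rw [← card_neighborFinset_eq_degree, this, card_map]

end SimpleGraph

theorem Nat.exists_symmetric_finset {m d : ℕ} (hm : Even m) (hd : d < m) :
    ∃ T : Finset ℕ, (∀ a ∈ T, 0 < a ∧ a < m ∧ m - a ∈ T) ∧ #T = d := by
  obtain ⟨c, rfl⟩ := hm
  rcases Nat.even_or_odd d with ⟨r, rfl⟩ | ⟨r, rfl⟩
  · refine ⟨(Icc (c - r) (c + r)).erase c, fun a ha => ?_, ?_⟩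
    · simp only [mem_erase, mem_Icc] at ha ⊢
      omega
    · rw [card_erase_of_mem (by simp), Nat.card_Icc]
      omega
  · refine ⟨Icc (c - r) (c + r), fun a ha => ?_, ?_⟩
    · simp only [mem_Icc] at ha ⊢
      omega
    · rw [Nat.card_Icc]
      omega

theorem ZMod.exists_symmetric_finset {m d : ℕ} [NeZero m] (hm : Even m) (hd : d < m) :
    ∃ s : Finset (ZMod m), (0 : ZMod m) ∉ s ∧ (∀ a ∈ s, -a ∈ s) ∧ #s = d := by
  obtain ⟨T, hT, rfl⟩ := Nat.exists_symmetric_finset hm hd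
  refine ⟨T.image (↑), ?_, ?_, card_image_of_injOn fun a ha b hb hab => ?_⟩
  · simp only [mem_image, not_exists, not_and, ZMod.natCast_eq_zero_iff]
    intro a ha hdvd
    exact (hT a ha).2.1.not_ge (Nat.le_of_dvd (hT a ha).1 hdvd)
  · simp only [mem_image, forall_exists_index, and_imp]
    rintro _ a ha rfl
    refine ⟨m - a, (hT a ha).2.2, ?_⟩
    rw [Nat.cast_sub (hT a ha).2.1.le, ZMod.natCast_self, zero_sub]
  · have := congrArg ZMod.val hab
    rwa [ZMod.val_cast_of_lt (hT a ha).2.1, ZMod.val_cast_of_lt (hT b hb).2.1] at this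

theorem SimpleGraph.exists_isRegularOfDegree (W : Type*) [Fintype W] {d : ℕ}
    (hW : Even (Fintype.card W)) (hd : d < Fintype.card W) :
    ∃ (G : SimpleGraph W) (_ : DecidableRel G.Adj), G.IsRegularOfDegree d := by
  have : NeZero (Fintype.card W) := ⟨by omega⟩
  obtain ⟨s, h0, hneg, rfl⟩ := ZMod.exists_symmetric_finset hW hd
  have e : W ≃ ZMod (Fintype.card W) := Fintype.equivOfCardEq (ZMod.card _).symm
  exact ⟨_, inferInstance, (isRegularOfDegree_circulantGraph h0 hneg).comap_equiv e⟩

theorem IsGraphicList.of_equiv {V : Type*} [Fintype V] {l : List ℕ} (G : SimpleGraph V)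
    [DecidableRel G.Adj] (e : V ≃ Fin l.length) (h : ∀ v, G.degree v = l.get (e v)) :
    IsGraphicList l :=
  ⟨G.comap e.symm, inferInstance, fun i => by
    rw [SimpleGraph.degree_comap_equiv, h, Equiv.apply_symm_apply]⟩

open SimpleGraph List in
theorem isGraphicList_replicate_of_isRegularOfDegree {k m d : ℕ} (H : SimpleGraph (Fin m))
    [DecidableRel H.Adj] (hH : H.IsRegularOfDegree d) :
    IsGraphicList (replicate k (k + m + k - 1) ++ replicate m (k + d) ++ replicate k k) := by
  have hlen : k + (m + k) = (replicate k (k + m + k - 1) ++ replicate m (k + d) ++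
      replicate k k).length := by simp [Nat.add_assoc]
  refine .of_equiv ((⊤ : SimpleGraph (Fin k)).join (H ⊕g (⊥ : SimpleGraph (Fin k))))
    ((Equiv.sumCongr (.refl _) finSumFinEquiv).trans (finSumFinEquiv.trans (finCongr hlen))) ?_
  rintro (i | j | j)
  · rw [degree_join_inl, IsRegularOfDegree.top.degree_eq]
    simp [Nat.sub_add_comm i.pos, Nat.add_assoc]
  · rw [degree_join_inr, degree_sum_inl, hH.degree_eq]
    simp
  · rw [degree_join_inr, degree_sum_inr, IsRegularOfDegree.bot.degree_eq]
    simp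

theorem seq_ks_graphic_general {n k x : ℕ} (hn : Even n)
    (hx1 : 2 * k ≤ x) (hx2 : x ≤ n - k - 1) :
    IsGraphicList
      (List.replicate k (n - 1) ++ List.replicate (n - 2 * k) x ++
        List.replicate k k) := by
  obtain ⟨H, _, hH⟩ : ∃ (H : SimpleGraph (Fin (n - 2 * k))) (_ : DecidableRel H.Adj),
      H.IsRegularOfDegree (x - k) := by
    rcases Nat.eq_zero_or_pos (n - 2 * k) with hm | hm
    · have : IsEmpty (Fin (n - 2 * k)) := by rw [hm]; infer_instance
      exact ⟨⊥, inferInstance, .of_isEmpty⟩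
    · obtain ⟨c, rfl⟩ := hn
      exact SimpleGraph.exists_isRegularOfDegree _ (by rw [Fintype.card_fin]; exact ⟨c - k, by omega⟩)
        (by rw [Fintype.card_fin]; omega)
  convert isGraphicList_replicate_of_isRegularOfDegree (k := k) H hH using 4 <;> omega

/-- For `k ≥ 2`, `n` even with `n ≥ 3k+1`, and `2k ≤ x ≤ n-k-1`, provided the total
degree sum is even, the sequence with `k` copies of `n-1`, then `n-2k` copies of `x`,
then `k` copies of `k` (length `n`) is graphic. -/
theorem seq_ks_graphic {n k x : ℕ} (hk : 2 ≤ k) (hn : Even n) (hnk : 3 * k + 1 ≤ n)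
    (hx1 : 2 * k ≤ x) (hx2 : x ≤ n - k - 1)
    (hsum : Even (k * (n - 1) + (n - 2 * k) * x + k * k)) :
    IsGraphicList
      (List.replicate k (n - 1) ++ List.replicate (n - 2 * k) x ++
        List.replicate k k) :=
  seq_ks_graphic_general hn hx1 hx2
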